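/- Let X be a δ-hyperbolic metric space and Σ a bounded set of isometries of X. Then D(Σ) > 0 if and only if the semigroup generated by Σ contains an isometry f with d∞(f) > 0. -/

import Mathlib

/-!
If a word `f ∈ Σⁿ` has `d∞(f) > 0`, then `D(Σ) ≥ d∞(f) / n`, because the iterates `fᵏ` lie in
`Σⁿᵏ`. Conversely, in a `δ`-hyperbolic space an isometry `g` with
`d(g²z, z) > d(gz, z) + 2δ` at a single point `z` moves the orbit of `z` away linearly, so it has
positive stable length. If no word of the semigroup is hyperbolic, every word `w` therefore
*folds*: `d(w²z, z) ≤ d(wz, z) + 2δ` for all `z`. For folding words `u`, `v`, `uv`, comparing the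
Gromov products at `x` of `ux`, `vx`, `uvx` and of the preimages `u⁻¹x`, `v⁻¹x`, `(uv)⁻¹x` gives
`d(uvx, x) ≤ max (d(ux, x)) (d(vx, x)) + 12δ`. Hence `|Σᴺᵏ|ₓ ≤ |Σᴺ|ₓ + 12δk`, so
`D(Σ) ≤ 12δ / N` for every `N`.
-/

open Filter Topology Function

/-- The set `Sⁿ` of all compositions of `n` elements of `S`. -/
def powSet {X : Type*} (S : Set (X → X)) (n : ℕ) : Set (X → X) :=
  {g | ∃ l : List (X → X), l.length = n ∧ (∀ f ∈ l, f ∈ S) ∧ g = l.foldr (· ∘ ·) id}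

/-- The joint displacement `|S|ₓ = sup_{f ∈ S} d(fx, x)`. -/
noncomputable def dispSup {X : Type*} [MetricSpace X] (x : X) (S : Set (X → X)) : ℝ :=
  sSup ((fun f => dist (f x) x) '' S)

/-- The stable length `d∞(f) = inf_{n ≥ 1} d(fⁿx, x)/n`
(which equals `lim_n d(fⁿx, x)/n` by Fekete's lemma). -/
noncomputable def stableLen {X : Type*} [MetricSpace X] (f : X → X) (x : X) : ℝ :=
  ⨅ n : ℕ, dist (f^[n + 1] x) x / (n + 1)

/-- The joint stable length `D(S) = inf_{n ≥ 1} |Sⁿ|ₓ / n`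
(which equals `lim_n |Sⁿ|ₓ / n` by Fekete's lemma). -/
noncomputable def jointStable {X : Type*} [MetricSpace X] (S : Set (X → X)) (x : X) : ℝ :=
  ⨅ n : ℕ, dispSup x (powSet S (n + 1)) / (n + 1)

theorem le_of_forall_nat_mul_le_add {a b c : ℝ} (h : ∀ k : ℕ, c * k ≤ a + b * k) : c ≤ b := by
  by_contra! hbc
  obtain ⟨k, hk⟩ := exists_nat_gt (a / (c - b))
  rw [div_lt_iff₀ (sub_pos.2 hbc)] at hk
  linarith [h k]

theorem Subadditive.apply_mul_le {u : ℕ → ℝ} (h : Subadditive u) (h0 : u 0 ≤ 0) (k n : ℕ) :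
    u (k * n) ≤ k * u n := by
  simpa using (h.apply_mul_add_le k n 0).trans (by linarith)

section Hyperbolic

variable {X : Type*} [MetricSpace X]

noncomputable def gromovProduct (z p q : X) : ℝ :=
  (dist p z + dist q z - dist p q) / 2

theorem gromovProduct_comm (z p q : X) : gromovProduct z p q = gromovProduct z q p := by
  rw [gromovProduct, gromovProduct, dist_comm p q, add_comm (dist p z)]

variable (X) in
def FourPointCondition (δ : ℝ) : Prop :=
  ∀ x y s t : X, dist x y + dist s t ≤ max (dist x s + dist y t) (dist x t + dist y s) + 2 * δ

def Folds (δ : ℝ) (g : X → X) : Prop :=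
  ∀ z, dist (g (g z)) z ≤ dist (g z) z + 2 * δ

theorem Isometry.iterate {g : X → X} (hg : Isometry g) (n : ℕ) : Isometry g^[n] := by
  induction n with
  | zero => exact isometry_id
  | succ n ih => exact ih.comp hg

theorem Isometry.subadditive_dist_iterate {g : X → X} (hg : Isometry g) (x : X) :
    Subadditive fun n => dist (g^[n] x) x := fun m n =>
  calc dist (g^[m + n] x) x ≤ dist (g^[m] (g^[n] x)) (g^[m] x) + dist (g^[m] x) x := by
        rw [iterate_add_apply]; exact dist_triangle _ _ _
    _ = dist (g^[m] x) x + dist (g^[n] x) x := by rw [(hg.iterate m).dist_eq, add_comm]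

theorem Isometry.dist_apply_le_add {g : X → X} (hg : Isometry g) (x z : X) :
    dist (g z) z ≤ dist (g x) x + 2 * dist x z := by
  have := dist_triangle4 (g z) (g x) x z
  rw [hg.dist_eq, dist_comm z x] at this
  linarith

-- subadditivity of `n ↦ d(gⁿx, x)` makes the error `2 d(x, z)` negligible
theorem Isometry.mul_le_dist_iterate_of_forall {g : X → X} (hg : Isometry g) {z : X} {e : ℝ}
    (h : ∀ n : ℕ, n * e ≤ dist (g^[n] z) z) (x : X) (n : ℕ) : n * e ≤ dist (g^[n] x) x := by
  refine le_of_forall_nat_mul_le_add (a := 2 * dist x z) fun k => ?_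
  calc n * e * k = ((k * n : ℕ) : ℝ) * e := by push_cast; ring
    _ ≤ dist (g^[k * n] z) z := h _
    _ ≤ dist (g^[k * n] x) x + 2 * dist x z := (hg.iterate _).dist_apply_le_add x z
    _ ≤ k * dist (g^[n] x) x + 2 * dist x z := by
        gcongr; exact (hg.subadditive_dist_iterate x).apply_mul_le (by simp) k n
    _ = 2 * dist x z + dist (g^[n] x) x * k := by ring

theorem stableLen_le (f : X → X) (x : X) (n : ℕ) :
    stableLen f x ≤ dist (f^[n + 1] x) x / (n + 1) :=
  ciInf_le ⟨0, by rintro _ ⟨m, rfl⟩; positivity⟩ n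

theorem le_stableLen {f : X → X} {x : X} {e : ℝ} (h : ∀ n : ℕ, n * e ≤ dist (f^[n] x) x) :
    e ≤ stableLen f x :=
  le_ciInf fun n => by
    rw [le_div_iff₀ (by positivity), mul_comm]
    exact_mod_cast h (n + 1)

namespace FourPointCondition

variable {δ : ℝ} (h : FourPointCondition X δ)
include h

theorem nonneg (x : X) : 0 ≤ δ := by
  simpa using h x x x x

theorem sub_le_gromovProduct_or (z p q r : X) :
    gromovProduct z p r - δ ≤ gromovProduct z p q ∨
      gromovProduct z q r - δ ≤ gromovProduct z p q := by
  have h4 := h p q r z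
  unfold gromovProduct
  rcases max_choice (dist p r + dist q z) (dist p z + dist q r) with hmax | hmax <;>
    rw [hmax] at h4
  · left; linarith
  · right; linarith

theorem dist_iterate_add_le {g : X → X} (hg : Isometry g) {z : X} {e : ℝ}
    (he : dist (g z) z + 2 * δ + e ≤ dist (g (g z)) z) (he0 : 0 < e) (n : ℕ) :
    dist (g^[n] z) z + e ≤ dist (g^[n + 1] z) z := by
  induction n with
  | zero =>
    have := dist_triangle (g (g z)) (g z) z
    rw [hg.dist_eq] at this
    simp only [iterate_zero, id_eq, dist_self, zero_add, iterate_one]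
    linarith [h.nonneg z]
  | succ n ih =>
    have hiter := (hg.iterate n).dist_eq
    have h01 : dist (g^[n] z) (g^[n + 1] z) = dist (g z) z := by
      rw [iterate_succ_apply, hiter, dist_comm]
    have h12 : dist (g^[n + 1 + 1] z) (g^[n + 1] z) = dist (g z) z := by
      rw [iterate_succ_apply, iterate_succ_apply, iterate_succ_apply, hiter, hg.dist_eq]
    have h02 : dist (g^[n] z) (g^[n + 1 + 1] z) = dist (g (g z)) z := by
      rw [iterate_succ_apply, iterate_succ_apply, hiter, dist_comm]
    -- at `gⁿ⁺¹z`, the product `(gⁿz | gⁿ⁺²z)` is below `(gⁿz | z)` by more than `δ`,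
    -- so the four-point condition forces `(z | gⁿ⁺²z)` to be small
    rcases h.sub_le_gromovProduct_or (g^[n + 1] z) (g^[n] z) (g^[n + 1 + 1] z) z with h1 | h1 <;>
      simp only [gromovProduct, dist_comm z (g^[n + 1] z), dist_comm (g^[n] z) (g^[n + 1] z)]
        at h1 h01 <;> linarith

theorem stableLen_pos_of_lt_dist {g : X → X} (hg : Isometry g) {z : X}
    (hz : dist (g z) z + 2 * δ < dist (g (g z)) z) (x : X) : 0 < stableLen g x := by
  set e := dist (g (g z)) z - (dist (g z) z + 2 * δ)
  have he0 : 0 < e := sub_pos.2 hz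
  have hlin : ∀ n : ℕ, n * e ≤ dist (g^[n] z) z := by
    intro n
    induction n with
    | zero => simp
    | succ n ih =>
      push_cast
      linarith [h.dist_iterate_add_le hg (le_of_eq (by ring)) he0 n]
  exact he0.trans_le (le_stableLen (hg.mul_le_dist_iterate_of_forall hlin x))

theorem folds_of_stableLen_nonpos {g : X → X} (hg : Isometry g) {x : X}
    (hx : stableLen g x ≤ 0) : Folds δ g :=
  fun _ => not_lt.1 fun hz => (h.stableLen_pos_of_lt_dist hg hz x).not_ge hx

end FourPointCondition

theorem Folds.sub_le_gromovProduct {δ : ℝ} {g : X → X} (hfold : Folds δ g) (hg : Isometry g)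
    {x y : X} (hy : g y = x) : dist (g x) x / 2 - δ ≤ gromovProduct x (g x) y := by
  have hfy := hfold y
  have hyx : dist y x = dist (g x) x := by rw [← hg.dist_eq, hy, dist_comm]
  rw [hy, dist_comm x y, hyx] at hfy
  unfold gromovProduct
  linarith

namespace FourPointCondition

variable {δ : ℝ} (h : FourPointCondition X δ) {u v : X → X} (hu : Isometry u) (hv : Isometry v)
  (hfu : Folds δ u) (hfv : Folds δ v) (hfuv : Folds δ (u ∘ v))
include h hu hv hfu hfv hfuv

/-- Here `a`, `b`, `p` are `u⁻¹x`, `v⁻¹x`, `(uv)⁻¹x`. Folding makes `(ux | a)`, `(vx | b)` and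
`(uvx | p)` almost maximal, and four-point inequalities through these points bound `(ux | vx)`. -/
theorem sub_le_gromovProduct_apply_apply {x a b p : X} (ha : u a = x) (hb : v b = x)
    (hp : u (v p) = x) :
    min (dist (u x) x) (dist (v x) x) / 2 - 5 * δ ≤ gromovProduct x (u x) (v x) := by
  have hδ := h.nonneg x
  have hA : dist a x = dist (u x) x := by rw [← hu.dist_eq, ha, dist_comm]
  have hB : dist b x = dist (v x) x := by rw [← hv.dist_eq, hb, dist_comm]
  have hP : dist p x = dist (u (v x)) x := by rw [← hv.dist_eq, ← hu.dist_eq, hp, dist_comm]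
  have hva : dist (v x) a = dist (u (v x)) x := by rw [← hu.dist_eq, ha]
  have hbp : dist b p = dist (u x) x := by rw [← hv.dist_eq, ← hu.dist_eq, hp, hb]
  have huv : dist (u x) (u (v x)) = dist (v x) x := by rw [hu.dist_eq, dist_comm]
  have hfa := hfu.sub_le_gromovProduct hu ha
  have hfb := hfv.sub_le_gromovProduct hv hb
  have hfp := hfuv.sub_le_gromovProduct (hu.comp hv) hp
  simp only [comp_apply] at hfp
  rcases h.sub_le_gromovProduct_or x (u x) (v x) a with h1 | h1 <;>
  rcases h.sub_le_gromovProduct_or x (u x) (v x) (u (v x)) with h2 | h2 <;>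
  rcases h.sub_le_gromovProduct_or x (v x) (u (v x)) b with h3 | h3 <;>
  rcases h.sub_le_gromovProduct_or x (u (v x)) b p with h4 | h4 <;>
  simp only [gromovProduct] at * <;>
  linarith [min_le_left (dist (u x) x) (dist (v x) x), min_le_right (dist (u x) x) (dist (v x) x)]

theorem dist_comp_le_max (hus : Surjective u) (hvs : Surjective v) (x : X) :
    dist (u (v x)) x ≤ max (dist (u x) x) (dist (v x) x) + 12 * δ := by
  obtain ⟨a, ha⟩ := hus x
  obtain ⟨b, hb⟩ := hvs x
  obtain ⟨p, hp⟩ := hvs a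
  have hprod := h.sub_le_gromovProduct_apply_apply hu hv hfu hfv hfuv ha hb (by rw [hp, ha])
  have hfa := hfu.sub_le_gromovProduct hu ha
  have hA : dist a x = dist (u x) x := by rw [← hu.dist_eq, ha, dist_comm]
  have hva : dist (v x) a = dist (u (v x)) x := by rw [← hu.dist_eq, ha]
  rw [gromovProduct_comm] at hprod hfa
  rcases h.sub_le_gromovProduct_or x (v x) a (u x) with h5 | h5 <;>
    simp only [gromovProduct] at * <;>
    linarith [min_add_max (dist (u x) x) (dist (v x) x), le_max_right (dist (u x) x) (dist (v x) x),
      h.nonneg x]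

end FourPointCondition

end Hyperbolic

section Words

variable {X : Type*} {S : Set (X → X)}

theorem foldr_comp_eq (l : List (X → X)) (c : X → X) :
    l.foldr (· ∘ ·) c = l.foldr (· ∘ ·) id ∘ c := by
  induction l with
  | nil => rfl
  | cons f l ih => simp only [List.foldr_cons, ih]; rfl

theorem powSet_zero : powSet S 0 = {id} := by
  ext g
  constructor
  · rintro ⟨l, hl, -, rfl⟩
    rw [List.length_eq_zero_iff.1 hl]
    rfl
  · rintro rfl
    exact ⟨[], rfl, by simp, rfl⟩

theorem powSet_one : powSet S 1 = S := by
  ext g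
  constructor
  · rintro ⟨l, hl, hmem, rfl⟩
    obtain ⟨f, rfl⟩ := List.length_eq_one_iff.1 hl
    exact hmem f List.mem_cons_self
  · intro hg
    exact ⟨[g], rfl, by simpa using hg, rfl⟩

theorem powSet_add (m n : ℕ) : powSet S (m + n) = Set.image2 (· ∘ ·) (powSet S m) (powSet S n) := by
  ext g
  constructor
  · rintro ⟨l, hl, hmem, rfl⟩
    refine ⟨(l.take m).foldr (· ∘ ·) id, ⟨l.take m, by simp [hl], ?_, rfl⟩,
      (l.drop m).foldr (· ∘ ·) id, ⟨l.drop m, by simp [hl], ?_, rfl⟩, ?_⟩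
    · exact fun f hf => hmem f (List.mem_of_mem_take hf)
    · exact fun f hf => hmem f (List.mem_of_mem_drop hf)
    · dsimp only
      rw [← foldr_comp_eq, ← List.foldr_append, List.take_append_drop]
  · rintro ⟨_, ⟨l₁, rfl, hmem₁, rfl⟩, _, ⟨l₂, rfl, hmem₂, rfl⟩, rfl⟩
    refine ⟨l₁ ++ l₂, List.length_append, fun f hf => ?_, ?_⟩
    · rcases List.mem_append.1 hf with hf | hf
      exacts [hmem₁ f hf, hmem₂ f hf]
    · rw [List.foldr_append]
      exact (foldr_comp_eq l₁ _).symm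

theorem comp_mem_powSet {u v : X → X} {m n : ℕ} (hu : u ∈ powSet S m) (hv : v ∈ powSet S n) :
    u ∘ v ∈ powSet S (m + n) :=
  powSet_add m n ▸ Set.mem_image2_of_mem hu hv

theorem iterate_mem_powSet {f : X → X} {n : ℕ} (hf : f ∈ powSet S n) (k : ℕ) :
    f^[k] ∈ powSet S (n * k) := by
  induction k with
  | zero => simp [powSet_zero]
  | succ k ih => rw [iterate_succ, Nat.mul_succ]; exact comp_mem_powSet ih hf

variable [MetricSpace X]

theorem isometry_of_mem_powSet (hS : ∀ f ∈ S, Isometry f ∧ Surjective f) {n : ℕ} {g : X → X}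
    (hg : g ∈ powSet S n) : Isometry g ∧ Surjective g := by
  induction n generalizing g with
  | zero =>
    rw [powSet_zero] at hg
    subst hg
    exact ⟨isometry_id, surjective_id⟩
  | succ n ih =>
    rw [powSet_add, powSet_one] at hg
    obtain ⟨u, hu, v, hv, rfl⟩ := hg
    exact ⟨(ih hu).1.comp (hS v hv).1, (ih hu).2.comp (hS v hv).2⟩

end Words

section JointDisplacement

variable {X : Type*} [MetricSpace X] {S : Set (X → X)} {x : X}

theorem dispSup_le {n : ℕ} {c : ℝ} (hc : 0 ≤ c) (h : ∀ g ∈ powSet S n, dist (g x) x ≤ c) :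
    dispSup x (powSet S n) ≤ c :=
  Real.sSup_le (by rintro _ ⟨g, hg, rfl⟩; exact h g hg) hc

theorem dispSup_nonneg (n : ℕ) : 0 ≤ dispSup x (powSet S n) :=
  Real.sSup_nonneg (by rintro _ ⟨g, -, rfl⟩; exact dist_nonneg)

theorem dispSup_powSet_zero_nonpos : dispSup x (powSet S 0) ≤ 0 :=
  dispSup_le le_rfl fun g hg => by rw [powSet_zero, Set.mem_singleton_iff] at hg; simp [hg]

theorem jointStable_nonneg : 0 ≤ jointStable S x :=
  Real.iInf_nonneg fun n => div_nonneg (dispSup_nonneg _) (by positivity)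

theorem jointStable_mul_le {n : ℕ} (hn : 1 ≤ n) : jointStable S x * n ≤ dispSup x (powSet S n) := by
  obtain ⟨m, rfl⟩ := Nat.exists_eq_add_of_le' hn
  rw [← le_div_iff₀ (by positivity)]
  push_cast
  exact ciInf_le ⟨0, by rintro _ ⟨k, rfl⟩; exact div_nonneg (dispSup_nonneg _) (by positivity)⟩ m

variable {C : ℝ} (hS : ∀ f ∈ S, Isometry f ∧ Surjective f) (hb : ∀ f ∈ S, dist (f x) x ≤ C)
include hS hb

theorem dist_le_of_mem_powSet {n : ℕ} {g : X → X} (hg : g ∈ powSet S n) :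
    dist (g x) x ≤ n * C := by
  induction n generalizing g with
  | zero => rw [powSet_zero, Set.mem_singleton_iff] at hg; simp [hg]
  | succ n ih =>
    rw [powSet_add, powSet_one] at hg
    obtain ⟨u, hu, v, hv, rfl⟩ := hg
    have huv := (isometry_of_mem_powSet hS hu).1.dist_eq (v x) x
    have := dist_triangle (u (v x)) (u x) x
    push_cast
    dsimp only [comp_apply]
    linarith [hb v hv, ih hu]

theorem dist_le_dispSup {n : ℕ} {g : X → X} (hg : g ∈ powSet S n) :
    dist (g x) x ≤ dispSup x (powSet S n) :=
  le_csSup ⟨n * C, by rintro _ ⟨f, hf, rfl⟩; exact dist_le_of_mem_powSet hS hb hf⟩ ⟨g, hg, rfl⟩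

theorem subadditive_dispSup : Subadditive fun n => dispSup x (powSet S n) := fun m n => by
  refine dispSup_le (add_nonneg (dispSup_nonneg m) (dispSup_nonneg n)) fun g hg => ?_
  rw [powSet_add] at hg
  obtain ⟨u, hu, v, hv, rfl⟩ := hg
  calc dist (u (v x)) x ≤ dist (u (v x)) (u x) + dist (u x) x := dist_triangle _ _ _
    _ = dist (v x) x + dist (u x) x := by rw [(isometry_of_mem_powSet hS hu).1.dist_eq]
    _ ≤ _ := by linarith [dist_le_dispSup hS hb hu, dist_le_dispSup hS hb hv]

theorem stableLen_div_le_jointStable {n : ℕ} (hn : 1 ≤ n) {f : X → X} (hf : f ∈ powSet S n) :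
    stableLen f x / n ≤ jointStable S x := by
  refine le_ciInf fun m => ?_
  rw [div_le_div_iff₀ (by positivity) (by positivity)]
  calc stableLen f x * (m + 1) ≤ dist (f^[m + 1] x) x :=
        (le_div_iff₀ (by positivity)).1 (stableLen_le f x m)
    _ ≤ dispSup x (powSet S (n * (m + 1))) := dist_le_dispSup hS hb (iterate_mem_powSet hf _)
    _ ≤ n * dispSup x (powSet S (m + 1)) := by
        exact_mod_cast (subadditive_dispSup hS hb).apply_mul_le dispSup_powSet_zero_nonpos n (m + 1)
    _ = _ := mul_comm _ _

variable {δ : ℝ} (h : FourPointCondition X δ)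
  (hfold : ∀ n, 1 ≤ n → ∀ w ∈ powSet S n, Folds δ w)
include h hfold

theorem FourPointCondition.dispSup_add_le_max {m n : ℕ} (hm : 1 ≤ m) (hn : 1 ≤ n) :
    dispSup x (powSet S (m + n)) ≤
      max (dispSup x (powSet S m)) (dispSup x (powSet S n)) + 12 * δ := by
  have hδ := h.nonneg x
  refine dispSup_le (add_nonneg ((dispSup_nonneg m).trans (le_max_left _ _)) (by positivity))
    fun g hg => ?_
  have hg' := hg
  rw [powSet_add] at hg'
  obtain ⟨u, hu, v, hv, rfl⟩ := hg'
  obtain ⟨hui, hus⟩ := isometry_of_mem_powSet hS hu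
  obtain ⟨hvi, hvs⟩ := isometry_of_mem_powSet hS hv
  calc dist (u (v x)) x ≤ max (dist (u x) x) (dist (v x) x) + 12 * δ :=
        h.dist_comp_le_max hui hvi (hfold m hm u hu) (hfold n hn v hv)
          (hfold _ (by omega) _ hg) hus hvs x
    _ ≤ _ := by gcongr <;> exact dist_le_dispSup hS hb ‹_›

theorem FourPointCondition.jointStable_nonpos : jointStable S x ≤ 0 := by
  have hδ := h.nonneg x
  have hgrowth : ∀ N, 1 ≤ N → ∀ k : ℕ,
      dispSup x (powSet S (N * (k + 1))) ≤ dispSup x (powSet S N) + 12 * δ * k := by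
    intro N hN k
    induction k with
    | zero => simp
    | succ k ih =>
      rw [Nat.mul_succ]
      have := h.dispSup_add_le_max hS hb hfold (Nat.mul_pos hN k.succ_pos) hN
      have := max_le ih (le_add_of_nonneg_right (by positivity))
      push_cast
      linarith
  have hscaled : ∀ N : ℕ, 1 ≤ N → jointStable S x * N ≤ 12 * δ := fun N hN =>
    le_of_forall_nat_mul_le_add (a := dispSup x (powSet S N)) fun k => by
      have := jointStable_mul_le (S := S) (x := x) (Nat.mul_pos hN k.succ_pos)
      push_cast at this
      linarith [hgrowth N hN k, mul_nonneg (jointStable_nonneg (S := S) (x := x)) N.cast_nonneg]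
  refine le_of_forall_nat_mul_le_add (a := 12 * δ) fun N => ?_
  rcases Nat.eq_zero_or_pos N with rfl | hN
  · simpa using hδ
  · simpa using hscaled N hN

end JointDisplacement

theorem stmt11_general {X : Type*} [MetricSpace X] (δ : ℝ)
    (hfpc : ∀ x y s t : X, dist x y + dist s t ≤
      max (dist x s + dist y t) (dist x t + dist y s) + 2 * δ)
    (S : Set (X → X)) (hS : ∀ f ∈ S, Isometry f ∧ Function.Surjective f)
    (x : X) (hb : ∃ C : ℝ, ∀ f ∈ S, dist (f x) x ≤ C) :
    0 < jointStable S x ↔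
      ∃ n : ℕ, 1 ≤ n ∧ ∃ f ∈ powSet S n, 0 < stableLen f x := by
  obtain ⟨C, hb⟩ := hb
  constructor
  · intro hD
    by_contra! hnone
    exact hD.not_ge <| FourPointCondition.jointStable_nonpos hS hb hfpc fun n hn w hw =>
      FourPointCondition.folds_of_stableLen_nonpos hfpc (isometry_of_mem_powSet hS hw).1
        (hnone n hn w hw)
  · rintro ⟨n, hn, f, hf, hpos⟩
    exact (div_pos hpos (by positivity)).trans_le (stableLen_div_le_jointStable hS hb hn hf)

/-- For a bounded set `Σ` of isometries of a `δ`-hyperbolic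
metric space, `D(Σ) > 0` iff the semigroup `⋃_{n ≥ 1} Σⁿ` generated by `Σ`
contains an isometry of positive stable length (i.e. a hyperbolic isometry). -/
theorem stmt11 {X : Type*} [MetricSpace X] (δ : ℝ) (hδ : 0 ≤ δ)
    (hfpc : ∀ x y s t : X, dist x y + dist s t ≤
      max (dist x s + dist y t) (dist x t + dist y s) + 2 * δ)
    (S : Set (X → X)) (hS : ∀ f ∈ S, Isometry f ∧ Function.Surjective f)
    (x : X) (hb : ∃ C : ℝ, ∀ f ∈ S, dist (f x) x ≤ C) :
    0 < jointStable S x ↔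
      ∃ n : ℕ, 1 ≤ n ∧ ∃ f ∈ powSet S n, 0 < stableLen f x :=
  stmt11_general δ hfpc S hS x hb
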